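/- For a nonzero ordinal γ and any ordinal δ < ω^γ, the ordinal ω^γ (with order topology) is not homeomorphic to any subspace of δ. -/

import Mathlib

open Set Ordinal
open scoped Cardinal

noncomputable section

universe u

/-- Natural addition on ordinals `a ♯ b` (Hessenberg sum), as formerly in Mathlib's
`Mathlib.SetTheory.Ordinal.NaturalOps` (since removed from Mathlib). -/
def Ordinal.nadd (a b : Ordinal.{u}) : Ordinal.{u} :=
  max (⨆ x : Iio a, Order.succ (Ordinal.nadd x.1 b)) (⨆ x : Iio b, Order.succ (Ordinal.nadd a x.1))
termination_by (a, b)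
decreasing_by
  · exact Prod.Lex.left _ _ x.2
  · exact Prod.Lex.right _ x.2

infixl:65 " ♯ " => Ordinal.nadd

/-- Derived set (non-isolated points) of a set of ordinals, as a subspace. -/
def deriv' (s : Set Ordinal.{0}) : Set Ordinal.{0} := {x ∈ s | x ∈ closure (s \ {x})}

/-- Iterated Cantor–Bendixson derivative. -/
def iterDeriv (s : Set Ordinal.{0}) (o : Ordinal.{0}) : Set Ordinal.{0} :=
  Ordinal.limitRecOn o s (fun _ ih => deriv' ih) (fun o _ ih => ⋂ (p : Ordinal.{0}) (h : p < o), ih p h)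

/-- `s` contains a homeomorphic copy of the ordinal `α` (with its order topology). -/
def HomeoCopy (α : Ordinal.{0}) (s : Set Ordinal.{0}) : Prop :=
  ∃ t : Set Ordinal, t ⊆ s ∧ Nonempty ((Iio α : Set Ordinal.{0}) ≃ₜ t)

/-- Two ordinals are biembeddable: each is homeomorphic to a subspace of the other. -/
def Biembed (α β : Ordinal.{0}) : Prop := HomeoCopy α (Iio β) ∧ HomeoCopy β (Iio α)

/-- Two sets of ordinals are order-homeomorphic: there is an order-preserving homeomorphism. -/
def OrderHomeo (X Y : Set Ordinal.{0}) : Prop :=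
  ∃ e : X ≃ₜ Y, ∀ a b : X, a ≤ b ↔ e a ≤ e b

/-- An ordinal is order-reinforcing. -/
def OrderReinforcing (α : Ordinal.{0}) : Prop :=
  ∀ X : Set Ordinal, Nonempty ((Iio α : Set Ordinal.{0}) ≃ₜ X) → ∃ Y ⊆ X, OrderHomeo (Iio α) Y

/-- The Cantor–Bendixson rank of an ordinal: the least exponent in its Cantor normal form. -/
def CB (x : Ordinal.{0}) : Ordinal := if x = 0 then 0 else sSup {γ | (ω : Ordinal.{0}) ^ γ ∣ x}

/-- The natural (Hessenberg) sum of a finite family of ordinals. -/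
def natSumFam {k : ℕ} (α : Fin k → Ordinal.{0}) : Ordinal := (List.ofFn α).foldr (· ♯ ·) 0

/-- The Milner–Rado sum of a finite family of ordinals. -/
def mrSumFam {k : ℕ} (α : Fin k → Ordinal.{0}) : Ordinal :=
  sInf {δ | ∀ β : Fin k → Ordinal, (∀ i, β i < α i) → δ ≠ natSumFam β}

/-- The topological pigeonhole relation `β → (top α i)¹` for finitely many colours. -/
def TopPH {k : ℕ} (β : Ordinal.{0}) (α : Fin k → Ordinal.{0}) : Prop :=
  ∀ c : Ordinal → Fin k, ∃ i, HomeoCopy (α i) (Iio β ∩ c ⁻¹' {i})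

/-- The topological pigeonhole relation with an arbitrary index type of colours. -/
def TopPHFam {ι : Type*} (β : Ordinal.{0}) (α : ι → Ordinal.{0}) : Prop :=
  ∀ c : Ordinal → ι, ∃ i, HomeoCopy (α i) (Iio β ∩ c ⁻¹' {i})

/-- `ω̄[γ, m]`: `ω ^ γ * m + 1` if `γ > 0`, and `m` if `γ = 0`. -/
def obar (γ : Ordinal.{0}) (m : ℕ) : Ordinal := if γ = 0 then (m : Ordinal.{0}) else ω ^ γ * m + 1

/-- `C` is closed and unbounded in `o`. -/
def IsClubIn (C : Set Ordinal.{0}) (o : Ordinal.{0}) : Prop :=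
  C ⊆ Iio o ∧ (∀ x < o, ∃ y ∈ C, x ≤ y) ∧
    ∀ x < o, x ≠ 0 → (∀ y < x, ∃ z ∈ C, y < z ∧ z < x) → x ∈ C

/-- `S` is stationary in `o`: it meets every club subset of `o`. -/
def StationaryIn (S : Set Ordinal.{0}) (o : Ordinal.{0}) : Prop :=
  ∀ C, IsClubIn C o → (S ∩ C).Nonempty

/-
Cantor–Bendixson derivatives are preserved by homeomorphisms, and the `η`-th derivative of an
initial segment `Iio β` consists of the multiples of `ω ^ η` below `β` (nonzero when `η ≠ 0`).
If `γ = η + 1`, the `η`-th derivative of `ω ^ γ` is therefore infinite while that of `δ < ω ^ γ`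
is finite. If `γ` is a limit, then `δ < ω ^ η` for some `0 < η < γ`, so the `η`-th derivative of
`δ` is empty while that of `ω ^ γ` contains `ω ^ η`.
-/

open Order Cardinal

theorem iterDeriv_zero (s : Set Ordinal.{0}) : iterDeriv s 0 = s :=
  limitRecOn_zero _ _ _

theorem iterDeriv_add_one (s : Set Ordinal.{0}) (η : Ordinal.{0}) :
    iterDeriv s (η + 1) = deriv' (iterDeriv s η) :=
  limitRecOn_add_one _ _ _ _

theorem iterDeriv_of_isSuccLimit (s : Set Ordinal.{0}) {η : Ordinal.{0}} (hη : IsSuccLimit η) :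
    iterDeriv s η = ⋂ p < η, iterDeriv s p :=
  limitRecOn_limit _ _ _ _ hη

theorem deriv'_subset (s : Set Ordinal.{0}) : deriv' s ⊆ s := fun _ h => h.1

theorem deriv'_mono {s t : Set Ordinal.{0}} (h : s ⊆ t) : deriv' s ⊆ deriv' t :=
  fun _ ⟨hxs, hxc⟩ => ⟨h hxs, closure_mono (sdiff_subset_sdiff_left h) hxc⟩

theorem mem_deriv'_iff {s : Set Ordinal.{0}} {x : Ordinal.{0}} :
    x ∈ deriv' s ↔ x ∈ s ∧ x ≠ 0 ∧ ∀ y < x, (s ∩ Ioo y x).Nonempty := by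
  rw [deriv', mem_ofPred_eq, mem_closure_ne_iff_frequently_within, ← accPt_iff_frequently_nhdsNE,
    SuccOrder.accPt_principal, isMin_iff_eq_bot]
  rfl

theorem iterDeriv_subset (s : Set Ordinal.{0}) (η : Ordinal.{0}) : iterDeriv s η ⊆ s := by
  induction η using limitRecOn with
  | zero => rw [iterDeriv_zero]
  | add_one η ih => rw [iterDeriv_add_one]; exact (deriv'_subset _).trans ih
  | limit η hη _ =>
    rw [iterDeriv_of_isSuccLimit s hη]
    exact (iInter₂_subset 0 hη.bot_lt).trans (iterDeriv_zero s).subset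

theorem iterDeriv_mono {s t : Set Ordinal.{0}} (h : s ⊆ t) (η : Ordinal.{0}) :
    iterDeriv s η ⊆ iterDeriv t η := by
  induction η using limitRecOn with
  | zero => rwa [iterDeriv_zero, iterDeriv_zero]
  | add_one η ih => rw [iterDeriv_add_one, iterDeriv_add_one]; exact deriv'_mono ih
  | limit η hη ih =>
    rw [iterDeriv_of_isSuccLimit s hη, iterDeriv_of_isSuccLimit t hη]
    exact iInter₂_mono ih

theorem omega0_mul_dvd_of_mem_deriv' {a x : Ordinal.{0}} {s : Set Ordinal.{0}} (ha : a ≠ 0)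
    (hs : ∀ y ∈ s, a ∣ y) (hx : x ∈ deriv' s) : a * ω ∣ x := by
  obtain ⟨hxs, -, hacc⟩ := mem_deriv'_iff.1 hx
  obtain ⟨m, rfl⟩ := hs x hxs
  refine mul_dvd_mul_left a (isSuccPrelimit_iff_omega0_dvd.1 fun m' hm' => ?_)
  have ha' := pos_iff_ne_zero.2 ha
  obtain ⟨_, hys, hlt, hgt⟩ := hacc (a * m') ((mul_lt_mul_iff_right₀ ha').2 hm'.lt)
  obtain ⟨k, rfl⟩ := hs _ hys
  exact hm'.2 ((mul_lt_mul_iff_right₀ ha').1 hlt) ((mul_lt_mul_iff_right₀ ha').1 hgt)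

theorem mem_deriv'_of_omega0_mul_dvd {a x : Ordinal.{0}} {s : Set Ordinal.{0}} (ha : a ≠ 0)
    (hs : ∀ y ≤ x, a ∣ y → y ≠ 0 → y ∈ s) (hx : a * ω ∣ x) (hx0 : x ≠ 0) : x ∈ deriv' s := by
  refine mem_deriv'_iff.2 ⟨hs x le_rfl (dvd_of_mul_right_dvd hx) hx0, hx0, fun y hy => ?_⟩
  obtain ⟨c, rfl⟩ := hx
  have ha' := pos_iff_ne_zero.2 ha
  rw [mul_assoc] at hy hs ⊢
  have hc : IsSuccLimit (ω * c) :=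
    isSuccLimit_mul_left isSuccLimit_omega0 (pos_iff_ne_zero.2 (right_ne_zero_of_mul hx0))
  obtain ⟨d, hd, hyd⟩ := (lt_mul_iff_of_isSuccLimit hc).1 hy
  have hlt : a * (d + 1) < a * (ω * c) := (mul_lt_mul_iff_right₀ ha').2 (hc.add_one_lt hd)
  exact ⟨a * (d + 1), hs _ hlt.le (dvd_mul_right _ _) (mul_ne_zero ha (pos_of_gt (lt_add_one d)).ne'),
    hyd.trans ((mul_lt_mul_iff_right₀ ha').2 (lt_add_one d)), hlt⟩

theorem opow_dvd_of_forall_lt {b η x : Ordinal} (hb : b ≠ 0) (hη : IsSuccLimit η)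
    (h : ∀ p < η, b ^ p ∣ x) : b ^ η ∣ x := by
  rw [dvd_iff_mod_eq_zero]
  obtain ⟨p, hp, hrp⟩ := (lt_opow_of_isSuccLimit hb hη).1 (mod_lt x (opow_ne_zero η hb))
  rw [← mod_eq_of_lt hrp, mod_mod_of_dvd x (opow_dvd_opow b hp.le)]
  exact dvd_iff_mod_eq_zero.1 (h p hp)

theorem iterDeriv_Iio (β η : Ordinal.{0}) :
    iterDeriv (Iio β) η = {x | x < β ∧ ω ^ η ∣ x ∧ (η ≠ 0 → x ≠ 0)} := by
  induction η using limitRecOn with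
  | zero => ext x; simp [iterDeriv_zero]
  | add_one η ih =>
    have hω : ω ^ η ≠ 0 := opow_ne_zero η omega0_ne_zero
    ext x
    rw [iterDeriv_add_one, ih, opow_add_one]
    refine ⟨fun hx => ⟨(deriv'_subset _ hx).1,
      omega0_mul_dvd_of_mem_deriv' hω (fun y hy => hy.2.1) hx, fun _ => (mem_deriv'_iff.1 hx).2.1⟩,
      fun ⟨hxβ, hdvd, hx0⟩ => ?_⟩
    exact mem_deriv'_of_omega0_mul_dvd hω (fun y hyx hy hy0 => ⟨hyx.trans_lt hxβ, hy, fun _ => hy0⟩)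
      hdvd (hx0 (pos_of_gt (lt_add_one η)).ne')
  | limit η hη ih =>
    ext x
    simp only [iterDeriv_of_isSuccLimit _ hη, mem_iInter₂]
    constructor
    · intro hx
      have hx' : ∀ p < η, x < β ∧ ω ^ p ∣ x ∧ (p ≠ 0 → x ≠ 0) := fun p hp => by
        have hxp := hx p hp
        rwa [ih p hp] at hxp
      exact ⟨(hx' 0 hη.bot_lt).1, opow_dvd_of_forall_lt omega0_ne_zero hη fun p hp => (hx' p hp).2.1,
        fun _ => (hx' 1 (one_lt_of_isSuccLimit hη)).2.2 one_ne_zero⟩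
    · rintro ⟨hxβ, hdvd, hx0⟩ p hp
      rw [ih p hp]
      exact ⟨hxβ, (opow_dvd_opow ω hp.le).trans hdvd, fun _ => hx0 hη.ne_bot⟩

theorem iterDeriv_Iio_eq_empty {β η : Ordinal.{0}} (hη : η ≠ 0) (hβ : β ≤ ω ^ η) :
    iterDeriv (Iio β) η = ∅ := by
  rw [iterDeriv_Iio, eq_empty_iff_forall_notMem]
  rintro x ⟨hxβ, hdvd, hx0⟩
  exact (le_of_dvd (hx0 hη) hdvd).not_gt (hxβ.trans_le hβ)

theorem omega0_opow_mem_iterDeriv_Iio {β η : Ordinal.{0}} (h : ω ^ η < β) :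
    ω ^ η ∈ iterDeriv (Iio β) η := by
  rw [iterDeriv_Iio]
  exact ⟨h, dvd_rfl, fun _ => opow_ne_zero η omega0_ne_zero⟩

theorem finite_iterDeriv_Iio {β η : Ordinal.{0}} (h : β < ω ^ (η + 1)) :
    (iterDeriv (Iio β) η).Finite := by
  rw [opow_add_one, lt_mul_iff_of_isSuccLimit isSuccLimit_omega0] at h
  obtain ⟨_, hn, hβ⟩ := h
  obtain ⟨n, rfl⟩ := lt_omega0.1 hn
  refine ((finite_Iio n).image fun k : ℕ => ω ^ η * k).subset ?_
  rw [iterDeriv_Iio]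
  rintro _ ⟨hxβ, ⟨c, rfl⟩, -⟩
  have hc : c < n := (mul_lt_mul_iff_right₀ (opow_pos η omega0_pos)).1 (hxβ.trans hβ)
  obtain ⟨k, rfl⟩ := lt_omega0.1 (hc.trans (natCast_lt_omega0 n))
  exact ⟨k, Nat.cast_lt.1 hc, rfl⟩

theorem infinite_iterDeriv_Iio {β η : Ordinal.{0}} (h : ω ^ (η + 1) ≤ β) :
    (iterDeriv (Iio β) η).Infinite := by
  have hpos : 0 < ω ^ η := opow_pos η omega0_pos
  refine infinite_of_injective_forall_mem (f := fun n : ℕ => ω ^ η * (n + 1 : ℕ))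
    (fun m n hmn => Nat.succ_injective (Nat.cast_injective (mul_left_cancel₀ hpos.ne' hmn)))
    fun n => ?_
  rw [iterDeriv_Iio]
  refine ⟨lt_of_lt_of_le ?_ h, dvd_mul_right _ _,
    fun _ => mul_ne_zero hpos.ne' (Nat.cast_ne_zero.2 n.succ_ne_zero)⟩
  rw [opow_add_one]
  exact (mul_lt_mul_iff_right₀ hpos).2 (natCast_lt_omega0 _)

section Homeomorph

variable {X Y : Set Ordinal.{0}}

theorem coe_mem_deriv'_image_iff {A : Set X} {x : X} :
    (x : Ordinal) ∈ deriv' (Subtype.val '' A) ↔ x ∈ A ∧ x ∈ closure (A \ {x}) := by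
  rw [deriv', mem_ofPred_eq, Subtype.val_injective.mem_set_image, closure_subtype,
    image_sdiff Subtype.val_injective, image_singleton]

theorem Homeomorph.coe_mem_deriv'_image (e : X ≃ₜ Y) {A : Set X} {x : X}
    (hx : (x : Ordinal) ∈ deriv' (Subtype.val '' A)) :
    (e x : Ordinal) ∈ deriv' (Subtype.val '' (e '' A)) := by
  rw [coe_mem_deriv'_image_iff] at hx ⊢
  refine ⟨mem_image_of_mem e hx.1, ?_⟩
  rw [← image_singleton, ← image_sdiff e.injective, ← e.image_closure]
  exact mem_image_of_mem e hx.2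

theorem Homeomorph.coe_mem_iterDeriv (e : X ≃ₜ Y) (η : Ordinal.{0}) {x : X}
    (hx : (x : Ordinal) ∈ iterDeriv X η) : (e x : Ordinal) ∈ iterDeriv Y η := by
  induction η using limitRecOn generalizing x with
  | zero => rw [iterDeriv_zero]; exact (e x).2
  | add_one η ih =>
    rw [iterDeriv_add_one] at hx ⊢
    rw [← inter_eq_right.2 (iterDeriv_subset X η), ← Subtype.image_preimage_coe] at hx
    refine deriv'_mono ?_ (e.coe_mem_deriv'_image hx)
    rintro _ ⟨_, ⟨y, hy, rfl⟩, rfl⟩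
    exact ih hy
  | limit η hη ih =>
    rw [iterDeriv_of_isSuccLimit _ hη, mem_iInter₂] at hx ⊢
    exact fun p hp => ih p hp (hx p hp)

theorem Homeomorph.mk_iterDeriv_le (e : X ≃ₜ Y) (η : Ordinal.{0}) :
    #(iterDeriv X η) ≤ #(iterDeriv Y η) :=
  mk_le_of_injective (f := fun x => ⟨e ⟨x, iterDeriv_subset X η x.2⟩, e.coe_mem_iterDeriv η x.2⟩)
    fun _ _ hxy => by
      simpa only [Subtype.mk.injEq, SetCoe.ext_iff, EmbeddingLike.apply_eq_iff_eq] using hxy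

end Homeomorph

theorem HomeoCopy.mk_iterDeriv_le {α : Ordinal.{0}} {s : Set Ordinal.{0}} (h : HomeoCopy α s)
    (η : Ordinal.{0}) : #(iterDeriv (Iio α) η) ≤ #(iterDeriv s η) := by
  obtain ⟨t, hts, ⟨e⟩⟩ := h
  exact (e.mk_iterDeriv_le η).trans (mk_le_mk_of_subset (iterDeriv_mono hts η))

/-- `ω^γ` is not homeomorphic to any subspace of an ordinal `δ < ω^γ`. -/
theorem not_homeoCopy_omega_pow_of_lt (γ δ : Ordinal.{0}) (hγ : γ ≠ 0) (hδlt : δ < ω ^ γ) :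
    ¬ HomeoCopy (ω ^ γ) (Iio δ) := by
  intro h
  cases γ using limitRecOn with
  | zero => exact hγ rfl
  | add_one η =>
    have hinf := infinite_iff.1 (infinite_iterDeriv_Iio (β := ω ^ (η + 1)) le_rfl).to_subtype
    exact ((finite_iterDeriv_Iio hδlt).lt_aleph0.trans_le hinf).not_ge (h.mk_iterDeriv_le η)
  | limit γ hlim =>
    obtain ⟨η, hηγ, hδη⟩ := (lt_opow_of_isSuccLimit omega0_ne_zero hlim).1 hδlt
    set η' := max η 1
    have hη'γ : η' < γ := max_lt hηγ (one_lt_of_isSuccLimit hlim)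
    have hδη' : δ ≤ ω ^ η' := hδη.le.trans (opow_le_opow_right omega0_pos (le_max_left η 1))
    have hle := h.mk_iterDeriv_le η'
    rw [iterDeriv_Iio_eq_empty (zero_lt_one.trans_le (le_max_right η 1)).ne' hδη'] at hle
    have hne : #(iterDeriv (Iio (ω ^ γ)) η') ≠ 0 := mk_ne_zero_iff.2
      ⟨⟨_, omega0_opow_mem_iterDeriv_Iio ((opow_lt_opow_iff_right one_lt_omega0).2 hη'γ)⟩⟩
    exact hne (nonpos_iff_eq_zero.1 (hle.trans_eq (mk_eq_zero _)))

end
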